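/- arXiv:2006.01419 — 4 statements merged into one kernel-verified Lean document; each statement's English description precedes it below -/
import Mathlib

section
/- (Diverse policy improvement) In a finite MDP, let π_old be a policy with diverse Q-function Q^{π_old} (the fixed point of T^{π_old}), and let π_new maximize over policies π the objective J_{π_old}(π(·|s)) = E_{a∼π}[Q^{π_old}(s,a) + α log R^{π,α}(s,a) − α log(απ(a|s))] + (1−α)E_{a∼q}[log R^{π,α}(s,a) − log(απ(a|s))] for every state s. Then Q^{π_new}(s,a) ≥ Q^{π_old}(s,a) for all (s,a) ∈ S×A. -/
/-- Diverse policy improvement: if `π_new` maximizes the diverse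
policy objective `J_{π_old}` at every state, then the diverse Q-function of
`π_new` dominates that of `π_old` pointwise. -/
theorem diverse_policy_improvement
    {S A : Type*} [Fintype S] [Fintype A]
    (q : S → A → ℝ) (P : S → A → S → ℝ) (r : S → A → ℝ) (β γ α : ℝ)
    (hβ : 0 < β) (hγ0 : 0 ≤ γ) (hγ1 : γ < 1) (hα : α ∈ Set.Ioo (0:ℝ) 1)
    (hq : ∀ s a, 0 ≤ q s a) (hq1 : ∀ s, ∑ a, q s a = 1)
    (hP : ∀ s a s', 0 ≤ P s a s') (hP1 : ∀ s a, ∑ s', P s a s' = 1)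
    -- the diverse Bellman operator, parameterized by the policy
    (T : (S → A → ℝ) → (S → A → ℝ) → (S → A → ℝ))
    (hT : ∀ (pol : S → A → ℝ) (Q : S → A → ℝ) (s : S) (a : A),
      T pol Q s a = r s a / β + γ * ∑ s', P s a s' *
        ((∑ a', pol s' a' * (Q s' a'
            + α * Real.log (α * pol s' a' / (α * pol s' a' + (1 - α) * q s' a'))
            - α * Real.log (α * pol s' a')))
          + (1 - α) * ∑ a', q s' a' *
              (Real.log (α * pol s' a' / (α * pol s' a' + (1 - α) * q s' a'))
                - Real.log (α * pol s' a'))))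
    -- the diverse policy objective J_{π_old}(π(·|s)) built on a given Q-function
    (J : (S → A → ℝ) → (S → A → ℝ) → S → ℝ)
    (hJ : ∀ (Q : S → A → ℝ) (pol : S → A → ℝ) (s : S),
      J Q pol s = (∑ a, pol s a * (Q s a
            + α * Real.log (α * pol s a / (α * pol s a + (1 - α) * q s a))
            - α * Real.log (α * pol s a)))
        + (1 - α) * ∑ a, q s a *
            (Real.log (α * pol s a / (α * pol s a + (1 - α) * q s a))
              - Real.log (α * pol s a)))
    (pold pnew : S → A → ℝ)
    (hpold : ∀ s a, 0 < pold s a) (hpold1 : ∀ s, ∑ a, pold s a = 1)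
    (hpnew : ∀ s a, 0 < pnew s a) (hpnew1 : ∀ s, ∑ a, pnew s a = 1)
    (Qold Qnew : S → A → ℝ)
    (hQold : T pold Qold = Qold) (hQnew : T pnew Qnew = Qnew)
    (hmax : ∀ (pol : S → A → ℝ), (∀ s a, 0 < pol s a) → (∀ s, ∑ a, pol s a = 1) →
      ∀ s, J Qold pol s ≤ J Qold pnew s) :
    ∀ s a, Qold s a ≤ Qnew s a := by

  intro s0 a0
  -- T in terms of J
  have hTJ : ∀ (pol Q : S → A → ℝ) (s : S) (a : A),
      T pol Q s a = r s a / β + γ * ∑ s', P s a s' * J Q pol s' := by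
    intro pol Q s a
    rw [hT]
    congr 2
    exact Finset.sum_congr rfl fun s' _ => by rw [hJ]
  -- difference of J over the same policy
  have hJd : ∀ s', J Qold pnew s' - J Qnew pnew s'
      = ∑ a', pnew s' a' * (Qold s' a' - Qnew s' a') := by
    intro s'
    rw [hJ, hJ]
    have hc : ∀ (X Y C : ℝ), X + C - (Y + C) = X - Y := fun _ _ _ => by ring
    rw [hc]
    rw [← Finset.sum_sub_distrib]
    exact Finset.sum_congr rfl fun a' _ => by ring
  -- maximizer of Qold - Qnew
  obtain ⟨⟨sm, am⟩, -, hM⟩ := Finset.exists_max_image (Finset.univ : Finset (S × A))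
    (fun p => Qold p.1 p.2 - Qnew p.1 p.2) ⟨(s0, a0), Finset.mem_univ _⟩
  have hMle : ∀ s a, Qold s a - Qnew s a ≤ Qold sm am - Qnew sm am :=
    fun s a => hM (s, a) (Finset.mem_univ _)
  set M : ℝ := Qold sm am - Qnew sm am with hMdef
  have key : ∀ s a, Qold s a - Qnew s a ≤ γ * M := by
    intro s a
    have h1 : Qold s a ≤ T pnew Qold s a := by
      conv_lhs => rw [← hQold]
      rw [hTJ, hTJ]
      have : ∑ s', P s a s' * J Qold pold s' ≤ ∑ s', P s a s' * J Qold pnew s' := by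
        apply Finset.sum_le_sum
        intro s' _
        exact mul_le_mul_of_nonneg_left (hmax pold hpold hpold1 s') (hP s a s')
      nlinarith [this, hγ0, mul_le_mul_of_nonneg_left this hγ0]
    have h2 : T pnew Qold s a - T pnew Qnew s a
        = γ * ∑ s', P s a s' * (J Qold pnew s' - J Qnew pnew s') := by
      have hs : (∑ s', P s a s' * J Qold pnew s') - (∑ s', P s a s' * J Qnew pnew s')
          = ∑ s', P s a s' * (J Qold pnew s' - J Qnew pnew s') := by
        rw [← Finset.sum_sub_distrib]
        exact Finset.sum_congr rfl fun s' _ => by ring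
      rw [hTJ, hTJ, ← hs]
      ring
    have hb : ∀ s', J Qold pnew s' - J Qnew pnew s' ≤ M := by
      intro s'
      rw [hJd s']
      calc ∑ a', pnew s' a' * (Qold s' a' - Qnew s' a')
          ≤ ∑ a', pnew s' a' * M := by
            apply Finset.sum_le_sum
            intro a' _
            exact mul_le_mul_of_nonneg_left (hMle s' a') (hpnew s' a').le
        _ = M := by rw [← Finset.sum_mul, hpnew1, one_mul]
    calc Qold s a - Qnew s a ≤ T pnew Qold s a - T pnew Qnew s a := by
          rw [hQnew]; linarith [h1]
      _ = γ * ∑ s', P s a s' * (J Qold pnew s' - J Qnew pnew s') := h2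
      _ ≤ γ * ∑ s', P s a s' * M := by
          apply mul_le_mul_of_nonneg_left _ hγ0
          apply Finset.sum_le_sum
          intro s' _
          exact mul_le_mul_of_nonneg_left (hb s') (hP s a s')
      _ = γ * M := by rw [← Finset.sum_mul, hP1, one_mul]
  have hM0 : M ≤ 0 := by nlinarith [key sm am]
  have := key s0 a0
  nlinarith [mul_nonpos_of_nonneg_of_nonpos hγ0 hM0]
end

section
/- (Monotone improvement of the objective) Let {π_i} be the sequence generated by π_{i+1} = argmax_π J_{π_i}(π). Then for every state s, J_{π_{i+1}}(π_{i+1}(·|s)) ≥ J_{π_i}(π_{i+1}(·|s)) ≥ J_{π_i}(π_i(·|s)); i.e., the sequence {J_{π_i}(π_i(·|s))} is monotonically nondecreasing in i. -/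
/-- Monotone improvement of the objective: for the sequence of
policies generated by `π_{i+1} = argmax_π J_{π_i}(π)`, one has
`J_{π_{i+1}}(π_{i+1}(·|s)) ≥ J_{π_i}(π_{i+1}(·|s)) ≥ J_{π_i}(π_i(·|s))` for
every state `s`, so `{J_{π_i}(π_i(·|s))}` is monotonically nondecreasing. -/
theorem diverse_objective_monotone_improvement
    {S A : Type*} [Fintype S] [Fintype A]
    (q : S → A → ℝ) (P : S → A → S → ℝ) (r : S → A → ℝ) (β γ α : ℝ)
    (hβ : 0 < β) (hγ0 : 0 ≤ γ) (hγ1 : γ < 1) (hα : α ∈ Set.Ioo (0:ℝ) 1)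
    (hq : ∀ s a, 0 ≤ q s a) (hq1 : ∀ s, ∑ a, q s a = 1)
    (hP : ∀ s a s', 0 ≤ P s a s') (hP1 : ∀ s a, ∑ s', P s a s' = 1)
    -- the diverse Bellman operator, parameterized by the policy
    (T : (S → A → ℝ) → (S → A → ℝ) → (S → A → ℝ))
    (hT : ∀ (pol : S → A → ℝ) (Q : S → A → ℝ) (s : S) (a : A),
      T pol Q s a = r s a / β + γ * ∑ s', P s a s' *
        ((∑ a', pol s' a' * (Q s' a'
            + α * Real.log (α * pol s' a' / (α * pol s' a' + (1 - α) * q s' a'))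
            - α * Real.log (α * pol s' a')))
          + (1 - α) * ∑ a', q s' a' *
              (Real.log (α * pol s' a' / (α * pol s' a' + (1 - α) * q s' a'))
                - Real.log (α * pol s' a'))))
    -- the diverse policy objective J_{π_old}(π(·|s)) built on a given Q-function
    (J : (S → A → ℝ) → (S → A → ℝ) → S → ℝ)
    (hJ : ∀ (Q : S → A → ℝ) (pol : S → A → ℝ) (s : S),
      J Q pol s = β * ((∑ a, pol s a * (Q s a
            + α * (Real.log (α * pol s a / (α * pol s a + (1 - α) * q s a))
              - Real.log (α * pol s a))))
        + (1 - α) * ∑ a, q s a *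
            (Real.log (α * pol s a / (α * pol s a + (1 - α) * q s a))
              - Real.log (α * pol s a))))
    -- the sequence of policies and their diverse Q-functions
    (ps : ℕ → S → A → ℝ) (Qs : ℕ → S → A → ℝ)
    (hps : ∀ i s a, 0 < ps i s a) (hps1 : ∀ i s, ∑ a, ps i s a = 1)
    (hQs : ∀ i, T (ps i) (Qs i) = Qs i)
    (hargmax : ∀ i, ∀ (pol : S → A → ℝ), (∀ s a, 0 < pol s a) →
      (∀ s, ∑ a, pol s a = 1) → ∀ s, J (Qs i) pol s ≤ J (Qs i) (ps (i + 1)) s) :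
    ∀ i s, J (Qs i) (ps i) s ≤ J (Qs i) (ps (i + 1)) s
      ∧ J (Qs i) (ps (i + 1)) s ≤ J (Qs (i + 1)) (ps (i + 1)) s := by
  have hβ' : β ≠ 0 := ne_of_gt hβ
  -- difference of J at two Q-functions, same policy
  have hJdiff : ∀ (Q Q' pol : S → A → ℝ) (s : S),
      J Q pol s - J Q' pol s = β * ∑ a, pol s a * (Q s a - Q' s a) := by
    intro Q Q' pol s
    rw [hJ, hJ, ← mul_sub]
    congr 1
    rw [add_sub_add_right_eq_sub, ← Finset.sum_sub_distrib]
    exact Finset.sum_congr rfl fun a _ => by ring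
  -- Bellman operator expressed via J
  have hTJ : ∀ (pol Q : S → A → ℝ) (s : S) (a : A),
      T pol Q s a = r s a / β + γ * ∑ s', P s a s' * (J Q pol s' / β) := by
    intro pol Q s a
    rw [hT]
    congr 1
    congr 1
    apply Finset.sum_congr rfl
    intro s' _
    congr 1
    rw [hJ, mul_comm β, mul_div_assoc, div_self hβ', mul_one]
    congr 1
    apply Finset.sum_congr rfl
    intro a' _
    ring
  intro i s0
  have hfirst : J (Qs i) (ps i) s0 ≤ J (Qs i) (ps (i + 1)) s0 :=
    hargmax i (ps i) (hps i) (hps1 i) s0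
  -- max of Qs i - Qs (i+1) over S × A
  have hne : (Finset.univ : Finset (S × A)).Nonempty := by
    rcases (Finset.univ : Finset A).eq_empty_or_nonempty with h | h
    · exfalso
      have h1 := hps1 i s0
      rw [h] at h1
      simp at h1
    · exact ⟨(s0, h.choose), Finset.mem_univ _⟩
  obtain ⟨⟨sm, am⟩, -, hmax⟩ := Finset.exists_max_image (Finset.univ : Finset (S × A))
    (fun p : S × A => Qs i p.1 p.2 - Qs (i + 1) p.1 p.2) hne
  set M : ℝ := Qs i sm am - Qs (i + 1) sm am with hMdef
  have hM : ∀ s a, Qs i s a - Qs (i + 1) s a ≤ M := fun s a =>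
    hmax (s, a) (Finset.mem_univ _)
  -- Qs i is a sub-fixed point of T (ps (i+1))
  have hstep : ∀ s a, Qs i s a ≤ T (ps (i + 1)) (Qs i) s a := by
    intro s a
    have h0 : Qs i s a = T (ps i) (Qs i) s a := (congrFun (congrFun (hQs i) s) a).symm
    rw [h0, hTJ, hTJ]
    have hle : ∀ s' ∈ (Finset.univ : Finset S), P s a s' * (J (Qs i) (ps i) s' / β)
        ≤ P s a s' * (J (Qs i) (ps (i + 1)) s' / β) := by
      intro s' _
      refine mul_le_mul_of_nonneg_left ?_ (hP s a s')
      exact div_le_div_of_nonneg_right (hargmax i (ps i) (hps i) (hps1 i) s') hβ.le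
    have := Finset.sum_le_sum hle
    nlinarith [this]
  -- contraction-style bound on the difference of T at the two Q-functions
  have hTdiff : ∀ s a, T (ps (i + 1)) (Qs i) s a - T (ps (i + 1)) (Qs (i + 1)) s a
      ≤ γ * M := by
    intro s a
    rw [hTJ, hTJ]
    have hX : ∀ s', J (Qs i) (ps (i + 1)) s' / β - J (Qs (i + 1)) (ps (i + 1)) s' / β
        ≤ M := by
      intro s'
      rw [div_sub_div_same, hJdiff, mul_comm, mul_div_assoc, div_self hβ', mul_one]
      calc ∑ a', ps (i + 1) s' a' * (Qs i s' a' - Qs (i + 1) s' a')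
          ≤ ∑ a', ps (i + 1) s' a' * M :=
            Finset.sum_le_sum fun a' _ =>
              mul_le_mul_of_nonneg_left (hM s' a') (le_of_lt (hps (i + 1) s' a'))
        _ = M := by rw [← Finset.sum_mul, hps1, one_mul]
    have hsum : (∑ s', P s a s' * (J (Qs i) (ps (i + 1)) s' / β))
        - (∑ s', P s a s' * (J (Qs (i + 1)) (ps (i + 1)) s' / β))
        = ∑ s', P s a s' * (J (Qs i) (ps (i + 1)) s' / β
            - J (Qs (i + 1)) (ps (i + 1)) s' / β) := by
      rw [← Finset.sum_sub_distrib]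
      exact Finset.sum_congr rfl fun s' _ => by ring
    have hb : (∑ s', P s a s' * (J (Qs i) (ps (i + 1)) s' / β
        - J (Qs (i + 1)) (ps (i + 1)) s' / β)) ≤ M := by
      calc (∑ s', P s a s' * (J (Qs i) (ps (i + 1)) s' / β
            - J (Qs (i + 1)) (ps (i + 1)) s' / β))
          ≤ ∑ s', P s a s' * M :=
            Finset.sum_le_sum fun s' _ =>
              mul_le_mul_of_nonneg_left (hX s') (hP s a s')
        _ = M := by rw [← Finset.sum_mul, hP1, one_mul]
      -- conclude
    have : (r s a / β + γ * ∑ s', P s a s' * (J (Qs i) (ps (i + 1)) s' / β))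
        - (r s a / β + γ * ∑ s', P s a s' * (J (Qs (i + 1)) (ps (i + 1)) s' / β))
        = γ * ((∑ s', P s a s' * (J (Qs i) (ps (i + 1)) s' / β))
          - (∑ s', P s a s' * (J (Qs (i + 1)) (ps (i + 1)) s' / β))) := by ring
    rw [this, hsum]
    exact mul_le_mul_of_nonneg_left hb hγ0
  -- hence Qs i - Qs (i+1) ≤ γ * M pointwise
  have hgm : ∀ s a, Qs i s a - Qs (i + 1) s a ≤ γ * M := by
    intro s a
    have h1 := hstep s a
    have h2 : Qs (i + 1) s a = T (ps (i + 1)) (Qs (i + 1)) s a :=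
      (congrFun (congrFun (hQs (i + 1)) s) a).symm
    have h3 := hTdiff s a
    linarith
  have hM0 : M ≤ 0 := by
    have := hgm sm am
    nlinarith
  have hQle : ∀ s a, Qs i s a ≤ Qs (i + 1) s a := by
    intro s a
    have := hM s a
    linarith
  refine ⟨hfirst, ?_⟩
  have hd := hJdiff (Qs (i + 1)) (Qs i) (ps (i + 1)) s0
  have hsum : 0 ≤ ∑ a, ps (i + 1) s0 a * (Qs (i + 1) s0 a - Qs i s0 a) :=
    Finset.sum_nonneg fun a _ =>
      mul_nonneg (le_of_lt (hps (i + 1) s0 a)) (sub_nonneg.mpr (hQle s0 a))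
  nlinarith
end

section
/- (Gradient equivalence, key cancellation step) Let π_θ(·|s) be a parameterized positive density on A and q(·|s) a fixed positive density, α ∈ (0,1), and R^{π_θ,α}(s,a) = απ_θ(a|s)/(απ_θ(a|s)+(1−α)q(a|s)). Then α E_{a∼π_θ}[∇_θ log R^{π_θ,α}(s,a)] + (1−α) E_{a∼q}[∇_θ log(1−R^{π_θ,α}(s,a))] = 0. -/
/-! With `u = α π_θ(a)` and `c = (1 - α) q(a)` we have `R = u / (u + c)` and `1 - R = c / (u + c)`,
so `∂ log R = u' c / (u (u + c))` and `∂ log (1 - R) = -u' / (u + c)`. Hence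
`u ∂ log R + c ∂ log (1 - R) = 0` already for every action `a`, and the two expectations cancel
term by term. -/

open Real Finset

section

variable {u : ℝ → ℝ} {u' c x : ℝ}

theorem HasDerivAt.log_div_add_const (hu : HasDerivAt u u' x) (hu0 : u x ≠ 0)
    (huc : u x + c ≠ 0) :
    HasDerivAt (fun t => Real.log (u t / (u t + c))) (u' * c / (u x * (u x + c))) x := by
  convert (hu.fun_div (hu.add_const c) huc).log (div_ne_zero hu0 huc) using 1
  field_simp
  ring

theorem HasDerivAt.log_one_sub_div_add_const (hu : HasDerivAt u u' x) (hc : c ≠ 0)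
    (huc : u x + c ≠ 0) :
    HasDerivAt (fun t => Real.log (1 - u t / (u t + c))) (-(u' / (u x + c))) x := by
  have h_one_sub : 1 - u x / (u x + c) = c / (u x + c) := by field_simp; ring
  convert ((hu.fun_div (hu.add_const c) huc).const_sub 1).log
    (by rw [h_one_sub]; exact div_ne_zero hc huc) using 1
  rw [h_one_sub]
  field_simp
  ring

theorem mul_deriv_log_div_add_const_add_mul_deriv_log_one_sub (hu : HasDerivAt u u' x)
    (hu0 : u x ≠ 0) (hc : c ≠ 0) (huc : u x + c ≠ 0) :
    u x * deriv (fun t => Real.log (u t / (u t + c))) x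
      + c * deriv (fun t => Real.log (1 - u t / (u t + c))) x = 0 := by
  rw [(hu.log_div_add_const hu0 huc).deriv, (hu.log_one_sub_div_add_const hc huc).deriv]
  field_simp
  ring

end

theorem ratio_gradient_cancellation_general {A : Type*} [Fintype A]
    (p : ℝ → A → ℝ) (q : A → ℝ) (α : ℝ) (hα : α ∈ Set.Ioo (0:ℝ) 1)
    (hp : ∀ θ a, 0 < p θ a) (hq : ∀ a, 0 < q a)
    (hdiff : ∀ a θ, DifferentiableAt ℝ (fun t => p t a) θ) (θ : ℝ) :
    α * ∑ a, p θ a *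
        deriv (fun t => Real.log (α * p t a / (α * p t a + (1 - α) * q a))) θ
      + (1 - α) * ∑ a, q a *
          deriv (fun t => Real.log (1 - α * p t a / (α * p t a + (1 - α) * q a))) θ
      = 0 := by
  obtain ⟨hα0, hα1⟩ := hα
  have hu0 (a : A) : 0 < α * p θ a := mul_pos hα0 (hp θ a)
  have hc (a : A) : 0 < (1 - α) * q a := mul_pos (sub_pos.2 hα1) (hq a)
  rw [mul_sum, mul_sum, ← sum_add_distrib]
  refine sum_eq_zero fun a _ => ?_
  rw [← mul_assoc, ← mul_assoc]
  exact mul_deriv_log_div_add_const_add_mul_deriv_log_one_sub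
    ((hdiff a θ).hasDerivAt.const_mul α) (hu0 a).ne' (hc a).ne' (add_pos (hu0 a) (hc a)).ne'

/-- gradient cancellation:
`α E_{a∼π_θ}[∇_θ log R^{π_θ,α}] + (1-α) E_{a∼q}[∇_θ log(1 − R^{π_θ,α})] = 0`. -/
theorem ratio_gradient_cancellation {A : Type*} [Fintype A]
    (p : ℝ → A → ℝ) (q : A → ℝ) (α : ℝ) (hα : α ∈ Set.Ioo (0:ℝ) 1)
    (hp : ∀ θ a, 0 < p θ a) (hq : ∀ a, 0 < q a)
    (hp1 : ∀ θ, ∑ a, p θ a = 1) (hq1 : ∑ a, q a = 1)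
    (hdiff : ∀ a θ, DifferentiableAt ℝ (fun t => p t a) θ) (θ : ℝ) :
    α * ∑ a, p θ a *
        deriv (fun t => Real.log (α * p t a / (α * p t a + (1 - α) * q a))) θ
      + (1 - α) * ∑ a, q a *
          deriv (fun t => Real.log (1 - α * p t a / (α * p t a + (1 - α) * q a))) θ
      = 0 :=
  ratio_gradient_cancellation_general p q α hα hp hq hdiff θ
end

section
/- (Theorem 2: gradient equivalence of the two policy objectives) With parameterized policy π_θ, define J_{θ_old}(θ; s) = E_{a∼π_θ}[Q^{π_{θ_old}}(s,a) + α log R^{π_θ,α}(s,a) − α log(απ_θ(a|s))] + (1−α)E_{a∼q}[log R^{π_θ,α}(s,a) − log(απ_θ(a|s))] and J̃_{θ_old}(θ; s) = E_{a∼π_θ}[Q^{π_{θ_old}}(s,a) + α log R^{π_{θ_old}},α}(s,a) − α log π_θ(a|s)]. Then ∇_θ J_{θ_old}(θ; s)|_{θ=θ_old} = ∇_θ J̃_{θ_old}(θ; s)|_{θ=θ_old} for all s. -/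
/-!
Write `D = α π + (1 - α) q` for the mixture. Since `log R - log (α π) = -log D`, the first
objective collapses to `E_π[Q] - ∑ₐ D log D`, whose gradient is `∑ₐ π' (Q - α log D) - α ∑ₐ π'`.
The second has gradient `∑ₐ π' (Q + α log R_old - α log π_old) - α ∑ₐ π'`, and
`log R_old - log π_old = log α - log D_old`. The two agree because `∑ₐ π' = 0`,
the probabilities summing to one for every `θ`.
-/

open Real Finset

lemma Real.log_div_sub_log_self {x y : ℝ} (hx : x ≠ 0) (hy : y ≠ 0) :
    log (x / y) - log x = -log y := by
  rw [log_div hx hy]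
  ring

lemma sum_mul_log_ratio_eq_sub_sum_mul_log_mix {A : Type*} [Fintype A]
    (p q Q : A → ℝ) {α : ℝ} (hpα : ∀ a, α * p a ≠ 0)
    (hD : ∀ a, α * p a + (1 - α) * q a ≠ 0) :
    (∑ a, p a * (Q a + α * log (α * p a / (α * p a + (1 - α) * q a)) - α * log (α * p a)))
        + (1 - α) * ∑ a, q a *
            (log (α * p a / (α * p a + (1 - α) * q a)) - log (α * p a))
      = ∑ a, p a * Q a
          - ∑ a, (α * p a + (1 - α) * q a) * log (α * p a + (1 - α) * q a) := by
  have hratio a := Real.log_div_sub_log_self (hpα a) (hD a)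
  simp only [add_sub_assoc, ← mul_sub, hratio, mul_sum, ← sum_add_distrib, ← sum_sub_distrib]
  refine sum_congr rfl fun a _ => ?_
  ring

lemma sum_deriv_eq_zero_of_sum_const {ι : Type*} [Fintype ι] {w : ℝ → ι → ℝ} {w' : ι → ℝ}
    {c θ : ℝ} (hw : ∀ i, HasDerivAt (fun t => w t i) (w' i) θ) (hsum : ∀ t, ∑ i, w t i = c) :
    ∑ i, w' i = 0 := by
  have h : HasDerivAt (fun t => ∑ i, w t i) (∑ i, w' i) θ := HasDerivAt.fun_sum fun i _ => hw i
  simp only [hsum] at h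
  exact h.unique (hasDerivAt_const θ c)

lemma hasDerivAt_sum_mul_log {ι : Type*} [Fintype ι] {w : ℝ → ι → ℝ} {w' : ι → ℝ} {θ : ℝ}
    (hw : ∀ i, HasDerivAt (fun t => w t i) (w' i) θ) (hne : ∀ i, w θ i ≠ 0) :
    HasDerivAt (fun t => ∑ i, w t i * log (w t i)) (∑ i, w' i * (log (w θ i) + 1)) θ :=
  HasDerivAt.fun_sum fun i _ => by
    simpa only [mul_comm (w' i), Function.comp_def] using
      (Real.hasDerivAt_mul_log (hne i)).comp θ (hw i)

theorem policy_objective_gradient_equivalence_general {A : Type*} [Fintype A]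
    (p : ℝ → A → ℝ) (q : A → ℝ) (Q : A → ℝ) (α : ℝ) (hα : α ∈ Set.Ioo (0:ℝ) 1)
    (hp : ∀ θ a, 0 < p θ a) (hq : ∀ a, 0 < q a)
    (hp1 : ∀ θ, ∑ a, p θ a = 1)
    (hdiff : ∀ a θ, DifferentiableAt ℝ (fun t => p t a) θ) (θold : ℝ) :
    deriv (fun θ =>
        (∑ a, p θ a * (Q a
            + α * Real.log (α * p θ a / (α * p θ a + (1 - α) * q a))
            - α * Real.log (α * p θ a)))
          + (1 - α) * ∑ a, q a *
              (Real.log (α * p θ a / (α * p θ a + (1 - α) * q a))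
                - Real.log (α * p θ a))) θold
    = deriv (fun θ =>
        ∑ a, p θ a * (Q a
            + α * Real.log (α * p θold a / (α * p θold a + (1 - α) * q a))
            - α * Real.log (p θ a))) θold := by
  obtain ⟨hα0, hα1⟩ := hα
  have hpα θ a : α * p θ a ≠ 0 := (mul_pos hα0 (hp θ a)).ne'
  have hD θ a : α * p θ a + (1 - α) * q a ≠ 0 :=
    (add_pos (mul_pos hα0 (hp θ a)) (mul_pos (sub_pos.2 hα1) (hq a))).ne'
  set p' : A → ℝ := fun a => deriv (fun t => p t a) θold
  have hp' a : HasDerivAt (fun t => p t a) (p' a) θold := (hdiff a θold).hasDerivAt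
  have hsum : ∑ a, p' a = 0 := sum_deriv_eq_zero_of_sum_const hp' hp1
  simp only [sum_mul_log_ratio_eq_sub_sum_mul_log_mix _ q Q (hpα _) (hD _)]
  have hJ := (HasDerivAt.fun_sum (u := univ) fun a _ => (hp' a).mul_const (Q a)).fun_sub
    (hasDerivAt_sum_mul_log (fun a => ((hp' a).const_mul α).add_const ((1 - α) * q a))
      (hD θold))
  have hJ' := HasDerivAt.fun_sum (u := univ) fun a _ =>
    (hp' a).fun_mul ((((hp' a).log (hp θold a).ne').const_mul α).const_sub
      (Q a + α * log (α * p θold a / (α * p θold a + (1 - α) * q a))))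
  rw [hJ.deriv, hJ'.deriv]
  have hterm a : p' a * (Q a + α * log (α * p θold a / (α * p θold a + (1 - α) * q a))
        - α * log (p θold a)) + p θold a * -(α * (p' a / p θold a))
      = p' a * Q a - α * p' a * (log (α * p θold a + (1 - α) * q a) + 1) + α * log α * p' a := by
    rw [log_div (hpα θold a) (hD θold a), log_mul hα0.ne' (hp θold a).ne']
    field_simp [(hp θold a).ne']
    ring
  rw [sum_congr rfl fun a _ => hterm a, sum_add_distrib, sum_sub_distrib, ← mul_sum, hsum]
  ring

/-- Theorem 2: gradient equivalence of the two policy objectives: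
`J` (with the ratio function depending on the optimization argument) and `J̃`
(with the ratio function frozen at `θ_old`) have equal gradients at `θ = θ_old`. -/
theorem policy_objective_gradient_equivalence {A : Type*} [Fintype A]
    (p : ℝ → A → ℝ) (q : A → ℝ) (Q : A → ℝ) (α : ℝ) (hα : α ∈ Set.Ioo (0:ℝ) 1)
    (hp : ∀ θ a, 0 < p θ a) (hq : ∀ a, 0 < q a)
    (hp1 : ∀ θ, ∑ a, p θ a = 1) (hq1 : ∑ a, q a = 1)
    (hdiff : ∀ a θ, DifferentiableAt ℝ (fun t => p t a) θ) (θold : ℝ) :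
    deriv (fun θ =>
        (∑ a, p θ a * (Q a
            + α * Real.log (α * p θ a / (α * p θ a + (1 - α) * q a))
            - α * Real.log (α * p θ a)))
          + (1 - α) * ∑ a, q a *
              (Real.log (α * p θ a / (α * p θ a + (1 - α) * q a))
                - Real.log (α * p θ a))) θold
    = deriv (fun θ =>
        ∑ a, p θ a * (Q a
            + α * Real.log (α * p θold a / (α * p θold a + (1 - α) * q a))
            - α * Real.log (p θ a))) θold :=
  policy_objective_gradient_equivalence_general p q Q α hα hp hq hp1 hdiff θold
end
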